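/- Fix a sequence s and a window size ρ, and consider strict, transitively closed episodes that occur in s within some window of length at most ρ. The i-closure icl(G) = cl_E(cl_N(G)) is an idempotent and monotonic extension operator: (1) G ⪯ icl(G); (2) icl(icl(G)) = icl(G); (3) if G ⪯ H then icl(G) ⪯ icl(H). -/

import Mathlib

/-!
Strict episodes are rigid: the nodes sharing a label form a chain, so a node is determined by
its label and its rank in that chain, and an instance must place it at the matching occurrence
of its label. Hence `G ⪯ H` yields an embedding of `G` into `H` (a node-to-node matching by
label and rank, whose edges are preserved because an unpreserved edge could be reversed in a
linear extension of `H`). Embeddings pass through `cl_N`, since a symbol forced into every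
window of `G` either labels `H` or is forced into every window of `H`, and through `cl_E`,
since occurrences of `H` restrict to occurrences of `G`; an embedding gives `⪯`.
Idempotence holds because each occurrence of `G` extends to one of `cl_N G` spanning the same
window, so closing again adds no symbol, while `cl_E` does not change the occurrences.
-/

open scoped Classical

/-- An episode: a finite directed acyclic graph with nodes drawn from `ℕ`,
labelled by symbols of an alphabet `α`. -/
structure Episode (α : Type*) where
  nodes : Finset ℕ
  edge : ℕ → ℕ → Prop
  lab : ℕ → α
  edge_mem : ∀ ⦃x y : ℕ⦄, edge x y → x ∈ nodes ∧ y ∈ nodes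

namespace Episode

variable {α : Type*}

/-- Transitively closed: whenever there is a directed path from `u` to `v`,
`(u,v)` is an edge. -/
def TransClosed (G : Episode α) : Prop :=
  ∀ ⦃u v : ℕ⦄, Relation.TransGen G.edge u v → G.edge u v

/-- Acyclic: no directed cycles. -/
def Acyclic (G : Episode α) : Prop := ∀ v : ℕ, ¬ Relation.TransGen G.edge v v

/-- Strict: any two distinct nodes sharing the same label are joined by a
directed path. -/
def Strict (G : Episode α) : Prop :=
  ∀ u ∈ G.nodes, ∀ v ∈ G.nodes, u ≠ v → G.lab u = G.lab v →
    Relation.TransGen G.edge u v ∨ Relation.TransGen G.edge v u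

/-- The class `𝒮` of strict, transitively closed (acyclic) episodes. -/
def inS (G : Episode α) : Prop := G.Acyclic ∧ G.TransClosed ∧ G.Strict

/-- A sequence `s` covers an episode `G`: there is an injective map from the
nodes of `G` to indices of `s` matching labels and respecting edges. -/
def Covers (s : List α) (G : Episode α) : Prop :=
  ∃ f : {v // v ∈ G.nodes} → Fin s.length,
    Function.Injective f ∧ (∀ v, s.get (f v) = G.lab v.1) ∧
      ∀ u v, G.edge u.1 v.1 → f u < f v

/-- `f` witnesses that `s` is an instance of `G`: a bijective valid mapping. -/
def IsInstanceMap (s : List α) (G : Episode α)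
    (f : {v // v ∈ G.nodes} → Fin s.length) : Prop :=
  Function.Bijective f ∧ (∀ v, s.get (f v) = G.lab v.1) ∧
    ∀ u v, G.edge u.1 v.1 → f u < f v

/-- The subgraph of `H` induced on a set `U` of nodes. -/
def restrict (H : Episode α) (U : Finset ℕ) : Episode α where
  nodes := U
  edge := fun x y => x ∈ U ∧ y ∈ U ∧ H.edge x y
  lab := H.lab
  edge_mem := by rintro x y ⟨h1, h2, -⟩; exact ⟨h1, h2⟩

/-- `G ⪯ H`: `G` is a subepisode of `H`.  There is a subgraph of `H` with as
many nodes as `G` such that every sequence covering that subgraph covers `G`. -/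
def Subep (G H : Episode α) : Prop :=
  ∃ U : Finset ℕ, U ⊆ H.nodes ∧ U.card = G.nodes.card ∧
    ∀ s : List α, Covers s (H.restrict U) → Covers s G

/-- `G ≺ H`: proper subepisode. -/
def ProperSubep (G H : Episode α) : Prop := Subep G H ∧ ¬ Subep H G

/-- `G ∼ H`: every sequence covers `G` iff it covers `H`. -/
def Equivalent (G H : Episode α) : Prop := ∀ s : List α, Covers s G ↔ Covers s H

/-- The nodes of `G` are `0, …, card − 1` listed in the canonical order:
labels increase, and nodes with equal labels are ordered by the edges. -/
def CanonicallyIndexed [LinearOrder α] (G : Episode α) : Prop :=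
  G.nodes = Finset.range G.nodes.card ∧
    ∀ u ∈ G.nodes, ∀ v ∈ G.nodes, u < v →
      G.lab u < G.lab v ∨ (G.lab u = G.lab v ∧ G.edge u v)

/-- An occurrence (instance) of `G` inside `s` whose span is smaller than the
window size `ρ`: an injective valid mapping with `max f − min f < ρ`. -/
def IsOcc (s : List α) (ρ : ℕ) (G : Episode α)
    (f : {v // v ∈ G.nodes} → Fin s.length) : Prop :=
  Function.Injective f ∧ (∀ v, s.get (f v) = G.lab v.1) ∧
    (∀ u v, G.edge u.1 v.1 → f u < f v) ∧
    ∀ u v, (f u : ℕ) < (f v : ℕ) + ρ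

/-- `G` occurs in `s` within some window of length at most `ρ`. -/
def Occurs (s : List α) (ρ : ℕ) (G : Episode α) : Prop := ∃ f, IsOcc s ρ G f

/-- The symbol `x` occurs in `s` inside the interval `[min f, max f]` of an
occurrence `f`. -/
def SymInWindow (s : List α) {G : Episode α}
    (f : {v // v ∈ G.nodes} → Fin s.length) (x : α) : Prop :=
  ∃ i : Fin s.length, s.get i = x ∧ (∃ u, f u ≤ i) ∧ ∃ v, i ≤ f v

/-- The node closure `cl_N`: augment `G` with one new isolated node labelled
`x` for each symbol `x` of `s`, not labelling a node of `G`, that occurs inside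
the interval of every occurrence of `G` (with span `< ρ`). -/
noncomputable def clN [LinearOrder α] (s : List α) (ρ : ℕ) (G : Episode α) :
    Episode α :=
  let newLabs : List α := (s.toFinset.filter
      (fun x => (∀ f, IsOcc s ρ G f → SymInWindow s f x) ∧
        ∀ v ∈ G.nodes, G.lab v ≠ x)).sort (· ≤ ·)
  let base : ℕ := G.nodes.sup id + 1
  { nodes := G.nodes ∪ (Finset.range newLabs.length).image (fun i => base + i)
    edge := G.edge
    lab := fun v =>
      if h : base ≤ v ∧ v - base < newLabs.length ∧ v ∉ G.nodes then
        newLabs.get ⟨v - base, h.2.1⟩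
      else G.lab v
    edge_mem := by
      intro x y h
      exact ⟨Finset.mem_union_left _ (G.edge_mem h).1,
        Finset.mem_union_left _ (G.edge_mem h).2⟩ }

/-- The edge closure `cl_E`: the maximal episode covered by all instances of
`G` in `s` with span `< ρ`; it has an edge `(x,y)` whenever the (unique) valid
mapping of every such instance places `x` before `y`. -/
def clE (s : List α) (ρ : ℕ) (G : Episode α) : Episode α where
  nodes := G.nodes
  edge := fun x y => ∃ (hx : x ∈ G.nodes) (hy : y ∈ G.nodes),
    ∀ f, IsOcc s ρ G f → f ⟨x, hx⟩ < f ⟨y, hy⟩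
  lab := G.lab
  edge_mem := by rintro x y ⟨hx, hy, -⟩; exact ⟨hx, hy⟩

/-- The `i`-closure `icl(G) = cl_E(cl_N(G))`. -/
noncomputable def icl [LinearOrder α] (s : List α) (ρ : ℕ) (G : Episode α) :
    Episode α :=
  clE s ρ (clN s ρ G)

/-- The window `s[a, b]` (0-based, inclusive endpoints). -/
def window (s : List α) (a b : ℕ) : List α := (s.take (b + 1)).drop a

/-- `s[a,b]` is a minimal window of `G` in `s`: it covers `G` and no proper
subwindow of it covers `G`. -/
def IsMinimalWindow (s : List α) (G : Episode α) (a b : ℕ) : Prop :=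
  a ≤ b ∧ b < s.length ∧ Covers (window s a b) G ∧
    ∀ a' b', a ≤ a' → b' ≤ b → a' ≤ b' → (a', b') ≠ (a, b) →
      ¬ Covers (window s a' b') G

/-- Fixed-window frequency: the number of windows of length `ρ` (indexed by
their right endpoints, windows may stick out of the sequence) covering `G`. -/
noncomputable def freqF (s : List α) (ρ : ℕ) (G : Episode α) : ℕ :=
  ((Finset.range (s.length + ρ - 1)).filter
    (fun b => Covers (window s (b + 1 - ρ) b) G)).card

/-- Disjoint-window frequency: the maximal number of pairwise disjoint
intervals of length at most `ρ` whose windows cover `G`. -/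
noncomputable def freqD (s : List α) (ρ : ℕ) (G : Episode α) : ℕ :=
  sSup {n : ℕ | ∃ I : Fin n → ℕ × ℕ,
    (∀ i, (I i).1 ≤ (I i).2 ∧ (I i).2 < (I i).1 + ρ ∧ (I i).2 < s.length ∧
      Covers (window s (I i).1 (I i).2) G) ∧
    ∀ i j, i ≠ j → (I i).2 < (I j).1 ∨ (I j).2 < (I i).1}

/-- `G` is f-closed w.r.t. the fixed-window frequency. -/
noncomputable def FClosedF (s : List α) (ρ : ℕ) (G : Episode α) : Prop :=
  ¬ ∃ H : Episode α, inS H ∧ ProperSubep G H ∧ freqF s ρ H = freqF s ρ G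

/-- `G` is f-closed w.r.t. the disjoint-window frequency. -/
noncomputable def FClosedD (s : List α) (ρ : ℕ) (G : Episode α) : Prop :=
  ¬ ∃ H : Episode α, inS H ∧ ProperSubep G H ∧ freqD s ρ H = freqD s ρ G

/-- `G − e`: remove an edge. -/
def eraseEdge (G : Episode α) (e : ℕ × ℕ) : Episode α where
  nodes := G.nodes
  edge := fun x y => G.edge x y ∧ (x, y) ≠ e
  lab := G.lab
  edge_mem := by rintro x y ⟨h, -⟩; exact G.edge_mem h

/-- `G − v`: remove a node together with all incident edges. -/
def eraseNode (G : Episode α) (w : ℕ) : Episode α where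
  nodes := G.nodes.erase w
  edge := fun x y => G.edge x y ∧ x ≠ w ∧ y ≠ w
  lab := G.lab
  edge_mem := by
    rintro x y ⟨h, hx, hy⟩
    exact ⟨Finset.mem_erase.mpr ⟨hx, (G.edge_mem h).1⟩,
      Finset.mem_erase.mpr ⟨hy, (G.edge_mem h).2⟩⟩

/-- `G + e`: add an edge. -/
def addEdge (G : Episode α) (e : ℕ × ℕ) : Episode α where
  nodes := G.nodes ∪ {e.1, e.2}
  edge := fun x y => G.edge x y ∨ (x, y) = e
  lab := G.lab
  edge_mem := by
    rintro x y (h | h)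
    · exact ⟨Finset.mem_union_left _ (G.edge_mem h).1,
        Finset.mem_union_left _ (G.edge_mem h).2⟩
    · cases h
      exact ⟨Finset.mem_union_right _ (by simp), Finset.mem_union_right _ (by simp)⟩

/-- A skeleton edge: an edge `(v,w)` such that there is no two-step path
`v → u → w`. -/
def IsSkeletonEdge (G : Episode α) (e : ℕ × ℕ) : Prop :=
  G.edge e.1 e.2 ∧ ¬ ∃ u, G.edge e.1 u ∧ G.edge u e.2

/-- A proper skeleton edge: a skeleton edge whose endpoints carry different
labels. -/
def IsProperSkeletonEdge (G : Episode α) (e : ℕ × ℕ) : Prop :=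
  IsSkeletonEdge G e ∧ G.lab e.1 ≠ G.lab e.2

/-- The set of edges of `G`, as a set of pairs. -/
def edgeSet (G : Episode α) : Set (ℕ × ℕ) := {p | G.edge p.1 p.2}

/-- Lexicographic order on edges (using the canonical order of the nodes). -/
def edgeLT (e f : ℕ × ℕ) : Prop := e.1 < f.1 ∨ (e.1 = f.1 ∧ e.2 < f.2)

/-- `e` is the last (lexicographically largest) proper skeleton edge of `G`. -/
def IsLastEdge (G : Episode α) (e : ℕ × ℕ) : Prop :=
  IsProperSkeletonEdge G e ∧
    ∀ f, IsProperSkeletonEdge G f → f = e ∨ edgeLT f e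

/-- A solitary node: a node with no incident edges. -/
def Solitary (G : Episode α) (v : ℕ) : Prop :=
  v ∈ G.nodes ∧ ∀ u, ¬ G.edge u v ∧ ¬ G.edge v u

/-- A source node: a node with no incoming edges. -/
def IsSource (G : Episode α) (v : ℕ) : Prop := v ∈ G.nodes ∧ ∀ u, ¬ G.edge u v

/-- A proper skeleton edge `e` of `G` is derivable if `G ⪯ icl(G − e)`. -/
noncomputable def DerivableEdge [LinearOrder α] (s : List α) (ρ : ℕ)
    (G : Episode α) (e : ℕ × ℕ) : Prop :=
  IsProperSkeletonEdge G e ∧ Subep G (icl s ρ (G.eraseEdge e))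

/-- A solitary node `v` of `G` is derivable if `G ⪯ icl(G − v)`. -/
noncomputable def DerivableNode [LinearOrder α] (s : List α) (ρ : ℕ)
    (G : Episode α) (v : ℕ) : Prop :=
  Solitary G v ∧ Subep G (icl s ρ (G.eraseNode v))

/-- `GreedyFrom s t G f`: `f` is the greedy mapping of `G` in the suffix of `s`
starting at (0-based) position `t`, recording absolute indices of `s`:
repeatedly map the source node of `G` whose label has the earliest remaining
occurrence to that position, and recurse on the episode with that node
removed and the part of the sequence after that position. -/
inductive GreedyFrom (s : List α) : ℕ → Episode α → (ℕ → ℕ) → Prop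
  | empty (t : ℕ) (G : Episode α) (f : ℕ → ℕ) (hG : G.nodes = ∅) :
      GreedyFrom s t G f
  | step (t : ℕ) (G : Episode α) (f : ℕ → ℕ) (v k : ℕ)
      (hv : G.IsSource v) (ht : t ≤ k) (hk : k < s.length)
      (hlab : s.get ⟨k, hk⟩ = G.lab v)
      (hmin : ∀ j (hj : j < s.length), t ≤ j → j < k →
        ¬ ∃ w, G.IsSource w ∧ s.get ⟨j, hj⟩ = G.lab w)
      (hfv : f v = k)
      (hrec : GreedyFrom s (k + 1) (G.eraseNode v) f) :
      GreedyFrom s t G f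

/-- One step of removing a derivable proper skeleton edge or a derivable
solitary node. -/
noncomputable def RemStep [LinearOrder α] (s : List α) (ρ : ℕ) :
    Episode α → Episode α → Prop := fun G G' =>
  (∃ e, DerivableEdge s ρ G e ∧ G' = G.eraseEdge e) ∨
  (∃ v, DerivableNode s ρ G v ∧ G' = G.eraseNode v)

end Episode

theorem Relation.not_transGen_self_of_reverse {β : Type*} {r : β → β → Prop}
    (htr : ∀ ⦃a b c⦄, r a b → r b c → r a c) (hirr : ∀ a, ¬ r a a)
    {p q : β} (hpq : p ≠ q) (hnpq : ¬ r p q) (a : β) :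
    ¬ Relation.TransGen (fun x y => r x y ∨ (x = q ∧ y = p)) a a := by
  -- a path either avoids the new edge `q → p`, or factors as `x →* q → p →* y`
  have key : ∀ x y, Relation.TransGen (fun x y => r x y ∨ (x = q ∧ y = p)) x y →
      r x y ∨ ((x = q ∨ r x q) ∧ (p = y ∨ r p y)) := by
    intro x y hxy
    induction hxy with
    | single h =>
      rcases h with h | ⟨rfl, rfl⟩
      · exact Or.inl h
      · exact Or.inr ⟨Or.inl rfl, Or.inl rfl⟩
    | tail _ h ih =>
      rcases h with h | ⟨rfl, rfl⟩
      · rcases ih with h' | ⟨hq, rfl | hp⟩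
        · exact Or.inl (htr h' h)
        · exact Or.inr ⟨hq, Or.inr h⟩
        · exact Or.inr ⟨hq, Or.inr (htr hp h)⟩
      · rcases ih with h' | ⟨-, h' | h'⟩
        · exact Or.inr ⟨Or.inr h', Or.inl rfl⟩
        · exact absurd h' hpq
        · exact absurd h' hnpq
  intro h
  rcases key a a h with h | ⟨rfl | haq, rfl | hpa⟩
  · exact hirr a h
  · exact hpq rfl
  · exact hnpq hpa
  · exact hnpq haq
  · exact hnpq (htr hpa haq)

theorem Fintype.exists_equiv_fin_of_acyclic {β : Type*} [Fintype β] {r : β → β → Prop}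
    (hr : ∀ a, ¬ Relation.TransGen r a a) :
    ∃ e : β ≃ Fin (Fintype.card β), ∀ a b, r a b → e a < e b := by
  have : IsPartialOrder β (Relation.ReflTransGen r) :=
    { refl := fun _ => .refl
      trans := fun _ _ _ => .trans
      antisymm := fun a b hab hba => by
        rcases Relation.reflTransGen_iff_eq_or_transGen.1 hab with rfl | hab
        · rfl
        rcases Relation.reflTransGen_iff_eq_or_transGen.1 hba with rfl | hba
        · rfl
        exact absurd (hba.trans hab) (hr b) }
  obtain ⟨S, hS, hrS⟩ := extend_partialOrder (Relation.ReflTransGen r)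
  set l := Finset.univ.sort S
  have hlen : l.length = Fintype.card β := by rw [Finset.length_sort, Finset.card_univ]
  let get : Fin l.length ≃ β :=
    List.Nodup.getEquivOfForallMemList l (Finset.sort_nodup _ _) (fun a => by simp [l])
  refine ⟨get.symm.trans (finCongr hlen), fun a b hab => ?_⟩
  have hne : a ≠ b := by
    rintro rfl
    exact hr a (.single hab)
  simp only [Equiv.trans_apply, finCongr_apply, Fin.cast_lt_cast]
  refine lt_of_le_of_ne (not_lt.1 fun hba => hne ?_) (get.symm.injective.ne hne)
  have hSba : S (l.get (get.symm b)) (l.get (get.symm a)) :=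
    (Finset.pairwise_sort Finset.univ S).rel_get_of_lt hba
  rw [show l.get (get.symm b) = b from get.apply_symm_apply b,
    show l.get (get.symm a) = a from get.apply_symm_apply a] at hSba
  exact antisymm (hrS _ _ (.single hab)) hSba

namespace Episode

variable {α : Type*}

theorem ext {G H : Episode α} (hn : G.nodes = H.nodes) (he : G.edge = H.edge)
    (hl : G.lab = H.lab) : G = H := by
  cases G; cases H; cases hn; cases he; cases hl; rfl

theorem TransClosed.edge_trans {K : Episode α} (hK : K.TransClosed) {a b c : ℕ}
    (hab : K.edge a b) (hbc : K.edge b c) : K.edge a c :=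
  hK (.head hab (.single hbc))

theorem Acyclic.not_edge_self {K : Episode α} (hK : K.Acyclic) (a : ℕ) : ¬ K.edge a a :=
  fun h => hK a (.single h)

theorem Strict.edge_or_edge {K : Episode α} (hS : K.Strict) (hT : K.TransClosed) {a b : ℕ}
    (ha : a ∈ K.nodes) (hb : b ∈ K.nodes) (hne : a ≠ b) (hl : K.lab a = K.lab b) :
    K.edge a b ∨ K.edge b a :=
  (hS a ha b hb hne hl).imp (fun h => hT h) (fun h => hT h)

theorem inS.restrict {H : Episode α} (hH : inS H) {U : Finset ℕ} (hU : U ⊆ H.nodes) :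
    inS (H.restrict U) := by
  have hlift : ∀ {a b}, Relation.TransGen (H.restrict U).edge a b →
      Relation.TransGen H.edge a b := Relation.TransGen.mono (fun _ _ h => h.2.2) _ _
  refine ⟨fun v hv => hH.1 v (hlift hv), fun u v h => ?_, fun u hu v hv hne hl => ?_⟩
  · have hmem : u ∈ U ∧ v ∈ U := by
      induction h with
      | single h => exact ⟨h.1, h.2.1⟩
      | tail _ h ih => exact ⟨ih.1, h.2.1⟩
    exact ⟨hmem.1, hmem.2, hH.2.1 (hlift h)⟩
  · exact (hH.2.2.edge_or_edge hH.2.1 (hU hu) (hU hv) hne hl).imp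
      (fun h => .single ⟨hu, hv, h⟩) (fun h => .single ⟨hv, hu, h⟩)

noncomputable def rank (K : Episode α) (v : ℕ) : ℕ :=
  (K.nodes.filter fun w => K.lab w = K.lab v ∧ K.edge w v).card

theorem rank_lt_rank {K : Episode α} (hA : K.Acyclic) (hT : K.TransClosed) {v w : ℕ}
    (hl : K.lab v = K.lab w) (hvw : K.edge v w) : K.rank v < K.rank w := by
  refine Finset.card_lt_card ⟨fun u hu => ?_, fun hsub => ?_⟩
  · rw [Finset.mem_filter] at hu ⊢
    exact ⟨hu.1, hu.2.1.trans hl, hT.edge_trans hu.2.2 hvw⟩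
  · have hv := hsub (Finset.mem_filter.2 ⟨(K.edge_mem hvw).1, hl, hvw⟩)
    exact hA.not_edge_self v (Finset.mem_filter.1 hv).2.2

theorem eq_of_lab_eq_of_rank_eq {K : Episode α} (hK : inS K) {v w : ℕ} (hv : v ∈ K.nodes)
    (hw : w ∈ K.nodes) (hl : K.lab v = K.lab w) (hr : K.rank v = K.rank w) : v = w := by
  by_contra hne
  rcases hK.2.2.edge_or_edge hK.2.1 hv hw hne hl with h | h
  · exact (rank_lt_rank hK.1 hK.2.1 hl h).ne hr
  · exact (rank_lt_rank hK.1 hK.2.1 hl.symm h).ne' hr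

theorem IsInstanceMap.length_eq {s : List α} {K : Episode α}
    {f : {v // v ∈ K.nodes} → Fin s.length} (hf : IsInstanceMap s K f) :
    s.length = K.nodes.card := by
  simpa using (Fintype.card_of_bijective hf.1).symm

theorem exists_isInstanceMap_of_covers {s : List α} {G : Episode α} (h : Covers s G)
    (hlen : s.length = G.nodes.card) : ∃ g, IsInstanceMap s G g := by
  obtain ⟨g, hinj, hlab, hedge⟩ := h
  refine ⟨g, (Fintype.bijective_iff_injective_and_card g).2 ⟨hinj, ?_⟩, hlab, hedge⟩
  simp [hlen]

theorem rank_eq_card_of_isInstanceMap {s : List α} {K : Episode α} (hS : K.Strict)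
    (hT : K.TransClosed) {f : {v // v ∈ K.nodes} → Fin s.length} (hf : IsInstanceMap s K f)
    (v : {v // v ∈ K.nodes}) :
    K.rank v = (Finset.univ.filter fun j => j < f v ∧ s.get j = s.get (f v)).card := by
  obtain ⟨hbij, hlab, hedge⟩ := hf
  refine Finset.card_bij (fun w hw => f ⟨w, (Finset.mem_filter.1 hw).1⟩) ?_ ?_ ?_
  · intro w hw
    obtain ⟨-, hl, he⟩ := Finset.mem_filter.1 hw
    simp only [Finset.mem_filter, Finset.mem_univ, true_and, hlab]
    exact ⟨hedge ⟨w, _⟩ v he, hl⟩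
  · intro a _ b _ hab
    exact congrArg Subtype.val (hbij.1 hab)
  · intro j hj
    obtain ⟨hlt, hj⟩ := (Finset.mem_filter.1 hj).2
    obtain ⟨w, rfl⟩ := hbij.2 j
    rw [hlab, hlab] at hj
    have hne : w.1 ≠ v.1 := fun h => hlt.ne (by rw [Subtype.ext h])
    have hwv : K.edge w v := (hS.edge_or_edge hT w.2 v.2 hne hj).resolve_right
      fun hvw => (hedge v w hvw).not_gt hlt
    exact ⟨w, Finset.mem_filter.2 ⟨w.2, hj, hwv⟩, rfl⟩

theorem lab_eq_and_rank_eq_of_isInstanceMap {s : List α} {G K : Episode α} (hG : inS G)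
    (hK : inS K) {g : {v // v ∈ G.nodes} → Fin s.length} {e : {v // v ∈ K.nodes} → Fin s.length}
    (hg : IsInstanceMap s G g) (he : IsInstanceMap s K e) {u w} (hwu : e w = g u) :
    K.lab w = G.lab u ∧ K.rank w = G.rank u := by
  rw [← he.2.1, ← hg.2.1, rank_eq_card_of_isInstanceMap hK.2.2 hK.2.1 he,
    rank_eq_card_of_isInstanceMap hG.2.2 hG.2.1 hg, hwu]
  exact ⟨rfl, rfl⟩

theorem exists_isInstanceMap_of_acyclic (K : Episode α) {r : ℕ → ℕ → Prop}
    (hr : ∀ v, ¬ Relation.TransGen r v v) (hKr : ∀ u v, K.edge u v → r u v) :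
    ∃ (s : List α) (f : {v // v ∈ K.nodes} → Fin s.length),
      IsInstanceMap s K f ∧ ∀ u v, r u.1 v.1 → f u < f v := by
  obtain ⟨e, he⟩ := Fintype.exists_equiv_fin_of_acyclic
    (r := fun a b : {v // v ∈ K.nodes} => r a b)
    fun a h => hr a (h.lift Subtype.val fun _ _ h => h)
  let s := List.ofFn fun i => K.lab (e.symm i).1
  have hlen : Fintype.card {v // v ∈ K.nodes} = s.length := List.length_ofFn.symm
  let f := fun v => Fin.cast hlen (e v)
  have hmono : ∀ u v, r u.1 v.1 → f u < f v := fun u v h => he u v h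
  refine ⟨s, f, ⟨?_, fun v => by simp [s, f], fun u v h => hmono u v (hKr u v h)⟩, hmono⟩
  exact (finCongr hlen).bijective.comp e.bijective

structure IsEmbedding (G H : Episode α) (π : ℕ → ℕ) : Prop where
  injOn : Set.InjOn π G.nodes
  mapsTo : Set.MapsTo π G.nodes H.nodes
  lab_eq : ∀ v ∈ G.nodes, H.lab (π v) = G.lab v
  map_edge : ∀ ⦃u v⦄, G.edge u v → H.edge (π u) (π v)

theorem exists_lab_eq_and_rank_eq {G K : Episode α} (hG : inS G) (hK : inS K)
    (hcard : K.nodes.card = G.nodes.card) (hcov : ∀ s, Covers s K → Covers s G) :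
    ∀ u ∈ G.nodes, ∃ w ∈ K.nodes, K.lab w = G.lab u ∧ K.rank w = G.rank u := by
  obtain ⟨s, e, he, -⟩ := exists_isInstanceMap_of_acyclic K hK.1 fun _ _ h => h
  obtain ⟨g, hg⟩ := exists_isInstanceMap_of_covers (hcov s ⟨e, he.1.1, he.2⟩)
    (he.length_eq.trans hcard)
  intro u hu
  obtain ⟨w, hw⟩ := he.1.2 (g ⟨u, hu⟩)
  exact ⟨w, w.2, lab_eq_and_rank_eq_of_isInstanceMap hG hK hg he hw⟩

theorem apply_eq_of_lab_eq_of_rank_eq {s : List α} {G K : Episode α} (hG : inS G) (hK : inS K)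
    {g : {v // v ∈ G.nodes} → Fin s.length} {e : {v // v ∈ K.nodes} → Fin s.length}
    (hg : IsInstanceMap s G g) (he : IsInstanceMap s K e) (u : {v // v ∈ G.nodes})
    (w : {v // v ∈ K.nodes}) (hl : K.lab w = G.lab u) (hr : K.rank w = G.rank u) :
    e w = g u := by
  obtain ⟨w', hw'⟩ := he.1.2 (g u)
  obtain ⟨hl', hr'⟩ := lab_eq_and_rank_eq_of_isInstanceMap hG hK hg he hw'
  rwa [Subtype.ext (eq_of_lab_eq_of_rank_eq hK w.2 w'.2 (hl.trans hl'.symm)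
    (hr.trans hr'.symm))]

/-- An edge `u → v` of `G` whose image is not an edge of `K` could be reversed in a linear
extension of `K`, giving a sequence that covers `K` but not `G`. -/
theorem exists_isEmbedding_of_covers_imp {G K : Episode α} (hG : inS G) (hK : inS K)
    (hcard : K.nodes.card = G.nodes.card) (hcov : ∀ s, Covers s K → Covers s G) :
    ∃ π, IsEmbedding G K π := by
  choose! π hπK hπlab hπrank using exists_lab_eq_and_rank_eq hG hK hcard hcov
  have hinj : Set.InjOn π G.nodes := fun u hu v hv huv =>
    eq_of_lab_eq_of_rank_eq hG hu hv ((hπlab u hu).symm.trans (huv ▸ hπlab v hv))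
      ((hπrank u hu).symm.trans (huv ▸ hπrank v hv))
  refine ⟨π, ⟨hinj, hπK, hπlab, fun u v huv => ?_⟩⟩
  obtain ⟨hu, hv⟩ := G.edge_mem huv
  by_contra hnot
  have hne : π u ≠ π v := hinj.ne hu hv fun h => hG.1.not_edge_self u (h ▸ huv)
  obtain ⟨s, e, he, hrev⟩ := exists_isInstanceMap_of_acyclic K
    (r := fun x y => K.edge x y ∨ (x = π v ∧ y = π u))
    (Relation.not_transGen_self_of_reverse (r := K.edge) (fun _ _ _ => hK.2.1.edge_trans)
      hK.1.not_edge_self hne hnot) fun _ _ h => Or.inl h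
  obtain ⟨g, hg⟩ := exists_isInstanceMap_of_covers (hcov s ⟨e, he.1.1, he.2⟩)
    (he.length_eq.trans hcard)
  have hpos : ∀ x (hx : x ∈ G.nodes), e ⟨π x, hπK x hx⟩ = g ⟨x, hx⟩ := fun x hx =>
    apply_eq_of_lab_eq_of_rank_eq hG hK hg he _ _ (hπlab x hx) (hπrank x hx)
  have hfwd : g ⟨u, hu⟩ < g ⟨v, hv⟩ := hg.2.2 ⟨u, hu⟩ ⟨v, hv⟩ huv
  rw [← hpos u hu, ← hpos v hv] at hfwd
  exact hfwd.not_gt (hrev ⟨π v, hπK v hv⟩ ⟨π u, hπK u hu⟩ (Or.inr ⟨rfl, rfl⟩))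

theorem IsEmbedding.of_restrict {G H : Episode α} {U : Finset ℕ} {π : ℕ → ℕ}
    (hU : U ⊆ H.nodes) (hπ : IsEmbedding G (H.restrict U) π) : IsEmbedding G H π :=
  ⟨hπ.injOn, fun _ hv => hU (hπ.mapsTo hv), hπ.lab_eq, fun _ _ h => (hπ.map_edge h).2.2⟩

theorem IsEmbedding.restrict_image {G H : Episode α} {π : ℕ → ℕ} (hπ : IsEmbedding G H π) :
    IsEmbedding G (H.restrict (G.nodes.image π)) π :=
  ⟨hπ.injOn, fun _ hv => Finset.mem_image_of_mem π hv, hπ.lab_eq, fun _ _ h =>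
    ⟨Finset.mem_image_of_mem π (G.edge_mem h).1, Finset.mem_image_of_mem π (G.edge_mem h).2,
      hπ.map_edge h⟩⟩

theorem exists_isEmbedding_of_subep {G H : Episode α} (hG : inS G) (hH : inS H)
    (hGH : Subep G H) : ∃ π, IsEmbedding G H π := by
  obtain ⟨U, hU, hcard, hcov⟩ := hGH
  obtain ⟨π, hπ⟩ := exists_isEmbedding_of_covers_imp hG (hH.restrict hU) hcard hcov
  exact ⟨π, hπ.of_restrict hU⟩

theorem IsEmbedding.covers {G H : Episode α} {π : ℕ → ℕ} (hπ : IsEmbedding G H π)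
    {s : List α} (hs : Covers s H) : Covers s G := by
  obtain ⟨f, hinj, hlab, hedge⟩ := hs
  refine ⟨fun u => f ⟨π u, hπ.mapsTo u.2⟩, fun u v h => ?_, fun u => ?_,
    fun u v h => hedge _ _ (hπ.map_edge h)⟩
  · exact Subtype.ext (hπ.injOn u.2 v.2 (congrArg Subtype.val (hinj h)))
  · rw [hlab, hπ.lab_eq u u.2]

theorem IsEmbedding.subep {G H : Episode α} {π : ℕ → ℕ} (hπ : IsEmbedding G H π) :
    Subep G H :=
  ⟨G.nodes.image π, fun _ hv => by
      obtain ⟨u, hu, rfl⟩ := Finset.mem_image.1 hv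
      exact hπ.mapsTo hu,
    Finset.card_image_of_injOn hπ.injOn, fun _ hs => hπ.restrict_image.covers hs⟩

theorem IsEmbedding.isOcc_comp {G H : Episode α} {π : ℕ → ℕ} (hπ : IsEmbedding G H π)
    {s : List α} {ρ : ℕ} {f : {v // v ∈ H.nodes} → Fin s.length} (hf : IsOcc s ρ H f) :
    IsOcc s ρ G (fun u => f ⟨π u, hπ.mapsTo u.2⟩) := by
  obtain ⟨hinj, hlab, hedge, hspan⟩ := hf
  refine ⟨fun u v h => ?_, fun u => ?_, fun u v h => hedge _ _ (hπ.map_edge h),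
    fun _ _ => hspan _ _⟩
  · exact Subtype.ext (hπ.injOn u.2 v.2 (congrArg Subtype.val (hinj h)))
  · rw [hlab, hπ.lab_eq u u.2]

section Closure

variable (s : List α) (ρ : ℕ)

theorem edge_clE_of_edge {G : Episode α} {x y : ℕ} (h : G.edge x y) :
    (clE s ρ G).edge x y :=
  ⟨(G.edge_mem h).1, (G.edge_mem h).2, fun _ hf => hf.2.2.1 _ _ h⟩

theorem isOcc_clE_iff {G : Episode α} {f : {v // v ∈ G.nodes} → Fin s.length} :
    IsOcc s ρ (clE s ρ G) f ↔ IsOcc s ρ G f :=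
  ⟨fun ⟨hinj, hlab, hedge, hspan⟩ =>
      ⟨hinj, hlab, fun u v h => hedge u v (edge_clE_of_edge s ρ h), hspan⟩,
    fun hf => ⟨hf.1, hf.2.1, fun _ _ ⟨_, _, h⟩ => h f hf, hf.2.2.2⟩⟩

theorem clE_clE (G : Episode α) : clE s ρ (clE s ρ G) = clE s ρ G := by
  refine ext rfl ?_ rfl
  ext x y
  exact exists_congr fun hx => exists_congr fun hy =>
    forall_congr' fun f => imp_congr_left (isOcc_clE_iff s ρ)

theorem IsEmbedding.clE {G H : Episode α} {π : ℕ → ℕ} (hπ : IsEmbedding G H π) :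
    IsEmbedding (clE s ρ G) (clE s ρ H) π := by
  refine ⟨hπ.injOn, hπ.mapsTo, hπ.lab_eq, fun u v ⟨hu, hv, h⟩ => ?_⟩
  exact ⟨hπ.mapsTo hu, hπ.mapsTo hv, fun f hf => h _ (hπ.isOcc_comp hf)⟩

def freshBase (G : Episode α) : ℕ := G.nodes.sup id + 1

theorem lt_freshBase {G : Episode α} {v : ℕ} (hv : v ∈ G.nodes) : v < freshBase G :=
  Nat.lt_succ_of_le (Finset.le_sup (f := id) hv)

variable [LinearOrder α]

noncomputable def newLabels (G : Episode α) : Finset α :=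
  s.toFinset.filter fun x =>
    (∀ f, IsOcc s ρ G f → SymInWindow s f x) ∧ ∀ v ∈ G.nodes, G.lab v ≠ x

noncomputable def newLabelList (G : Episode α) : List α := (newLabels s ρ G).sort (· ≤ ·)

theorem clN_nodes (G : Episode α) : (clN s ρ G).nodes =
    G.nodes ∪ (Finset.range (newLabelList s ρ G).length).image (freshBase G + ·) := rfl

theorem clN_lab (G : Episode α) : (clN s ρ G).lab = fun v =>
    if h : freshBase G ≤ v ∧ v - freshBase G < (newLabelList s ρ G).length ∧ v ∉ G.nodes then
      (newLabelList s ρ G).get ⟨v - freshBase G, h.2.1⟩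
    else G.lab v := rfl

theorem clN_edge (G : Episode α) : (clN s ρ G).edge = G.edge := rfl

theorem clN_lab_of_mem {G : Episode α} {v : ℕ} (hv : v ∈ G.nodes) :
    (clN s ρ G).lab v = G.lab v :=
  by rw [clN_lab]; exact dif_neg fun h => h.2.2 hv

theorem clN_lab_freshBase_add {G : Episode α} {i : ℕ} (hi : i < (newLabelList s ρ G).length) :
    (clN s ρ G).lab (freshBase G + i) = (newLabelList s ρ G)[i] := by
  have hfresh : freshBase G + i ∉ G.nodes := fun h => by have := lt_freshBase h; omega
  rw [clN_lab]
  dsimp only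
  rw [dif_pos ⟨Nat.le_add_right _ _, by simpa using hi, hfresh⟩]
  simp

theorem nodes_subset_clN_nodes (G : Episode α) : G.nodes ⊆ (clN s ρ G).nodes :=
  Finset.subset_union_left

theorem mem_clN_nodes_sdiff {G : Episode α} {v : ℕ} :
    v ∈ (clN s ρ G).nodes \ G.nodes ↔
      ∃ i < (newLabelList s ρ G).length, freshBase G + i = v := by
  rw [clN_nodes, Finset.union_sdiff_left, Finset.mem_sdiff, Finset.mem_image]
  simp only [Finset.mem_range]
  exact ⟨fun h => h.1, fun h => ⟨h, by
    obtain ⟨i, -, rfl⟩ := h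
    exact fun hv => by have := lt_freshBase hv; omega⟩⟩

theorem bijOn_clN_lab (G : Episode α) :
    Set.BijOn (clN s ρ G).lab ↑((clN s ρ G).nodes \ G.nodes) ↑(newLabels s ρ G) := by
  have hnodup : (newLabelList s ρ G).Nodup := Finset.sort_nodup _ _
  refine ⟨fun v hv => ?_, fun v hv w hw hvw => ?_, fun x hx => ?_⟩
  · obtain ⟨i, hi, rfl⟩ := mem_clN_nodes_sdiff s ρ |>.1 hv
    rw [Finset.mem_coe, clN_lab_freshBase_add s ρ hi, ← Finset.mem_sort (· ≤ ·)]
    exact List.getElem_mem hi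
  · obtain ⟨i, hi, rfl⟩ := mem_clN_nodes_sdiff s ρ |>.1 hv
    obtain ⟨j, hj, rfl⟩ := mem_clN_nodes_sdiff s ρ |>.1 hw
    rw [clN_lab_freshBase_add s ρ hi, clN_lab_freshBase_add s ρ hj] at hvw
    rw [(hnodup.getElem_inj_iff).1 hvw]
  · obtain ⟨i, hi, rfl⟩ := List.getElem_of_mem ((Finset.mem_sort (· ≤ ·)).2 hx)
    exact ⟨freshBase G + i, mem_clN_nodes_sdiff s ρ |>.2 ⟨i, hi, rfl⟩,
      clN_lab_freshBase_add s ρ hi⟩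

theorem clN_eq_self {G : Episode α} (h : newLabels s ρ G = ∅) : clN s ρ G = G := by
  have hnil : newLabelList s ρ G = [] := by simp [newLabelList, h]
  refine ext ?_ rfl ?_
  · simp [clN_nodes, hnil]
  · rw [clN_lab]
    funext v
    exact dif_neg fun hv => by simpa [hnil] using hv.2.1

theorem not_mem_newLabels_of_mem {G : Episode α} {v : ℕ} (hv : v ∈ G.nodes) :
    G.lab v ∉ newLabels s ρ G :=
  fun h => (Finset.mem_filter.1 h).2.2 v hv rfl

/-- Each new node of `clN s ρ G` is placed at an occurrence of its label inside the window
of `f`, so the span of the extended occurrence does not grow. -/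
theorem IsOcc.exists_clN {G : Episode α} {f : {v // v ∈ G.nodes} → Fin s.length}
    (hf : IsOcc s ρ G f) :
    ∃ f' : {v // v ∈ (clN s ρ G).nodes} → Fin s.length, IsOcc s ρ (clN s ρ G) f' ∧
      ∀ u, (∃ a, f a ≤ f' u) ∧ ∃ b, f' u ≤ f b := by
  have hwin : ∀ v : {v // v ∈ (clN s ρ G).nodes}, v.1 ∉ G.nodes →
      SymInWindow s f ((clN s ρ G).lab v) := fun v hv =>
    (Finset.mem_filter.1 ((bijOn_clN_lab s ρ G).mapsTo
      (Finset.mem_sdiff.2 ⟨v.2, hv⟩))).2.1 f hf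
  choose p hp using hwin
  let f' : {v // v ∈ (clN s ρ G).nodes} → Fin s.length := fun v =>
    if h : v.1 ∈ G.nodes then f ⟨v, h⟩ else p v h
  have hold : ∀ v (h : v.1 ∈ G.nodes), f' v = f ⟨v, h⟩ := fun v h => dif_pos h
  have hlab : ∀ v, s.get (f' v) = (clN s ρ G).lab v := fun v => by
    by_cases h : v.1 ∈ G.nodes
    · rw [hold v h, hf.2.1, clN_lab_of_mem s ρ h]
    · simp only [f', dif_neg h, (hp v h).1]
  have hwithin : ∀ u, (∃ a, f a ≤ f' u) ∧ ∃ b, f' u ≤ f b := fun u => by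
    by_cases h : u.1 ∈ G.nodes
    · rw [hold u h]
      exact ⟨⟨_, le_rfl⟩, ⟨_, le_rfl⟩⟩
    · simp only [f', dif_neg h]
      exact (hp u h).2
  refine ⟨f', ⟨fun u v huv => ?_, hlab, fun u v h => ?_, fun u v => ?_⟩, hwithin⟩
  · have hl : (clN s ρ G).lab u = (clN s ρ G).lab v := by rw [← hlab, ← hlab, huv]
    by_cases hu : u.1 ∈ G.nodes <;> by_cases hv : v.1 ∈ G.nodes
    · rw [hold u hu, hold v hv] at huv
      exact Subtype.ext (congrArg Subtype.val (hf.1 huv) :)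
    · rw [clN_lab_of_mem s ρ hu] at hl
      exact absurd ((bijOn_clN_lab s ρ G).mapsTo (Finset.mem_sdiff.2 ⟨v.2, hv⟩))
        (hl ▸ not_mem_newLabels_of_mem s ρ hu)
    · rw [clN_lab_of_mem s ρ hv] at hl
      exact absurd ((bijOn_clN_lab s ρ G).mapsTo (Finset.mem_sdiff.2 ⟨u.2, hu⟩))
        (hl.symm ▸ not_mem_newLabels_of_mem s ρ hv)
    · exact Subtype.ext ((bijOn_clN_lab s ρ G).injOn (Finset.mem_sdiff.2 ⟨u.2, hu⟩)
        (Finset.mem_sdiff.2 ⟨v.2, hv⟩) hl)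
  · obtain ⟨hu, hv⟩ := G.edge_mem h
    rw [hold u hu, hold v hv]
    exact hf.2.2.1 _ _ h
  · obtain ⟨-, b, hb⟩ := hwithin u
    obtain ⟨⟨a, ha⟩, -⟩ := hwithin v
    have := hf.2.2.2 b a
    rw [Fin.le_def] at ha hb
    omega

/-- Occurrences of `icl s ρ G` span the same windows as those of `G`, so they force no
symbol that `clN` has not already added. -/
theorem newLabels_icl (G : Episode α) : newLabels s ρ (icl s ρ G) = ∅ := by
  refine Finset.eq_empty_of_forall_notMem fun x hx => ?_
  obtain ⟨hxs, hwin, hxlab⟩ := Finset.mem_filter.1 hx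
  have hxG : x ∈ newLabels s ρ G := by
    refine Finset.mem_filter.2 ⟨hxs, fun f hf => ?_, fun v hv hvx => ?_⟩
    · obtain ⟨f', hf', hwithin⟩ := hf.exists_clN s ρ
      obtain ⟨i, hi, ⟨u, hu⟩, ⟨v, hv⟩⟩ := hwin f' ((isOcc_clE_iff s ρ).2 hf')
      obtain ⟨⟨a, ha⟩, -⟩ := hwithin u
      obtain ⟨-, ⟨b, hb⟩⟩ := hwithin v
      exact ⟨i, hi, ⟨a, ha.trans hu⟩, ⟨b, hv.trans hb⟩⟩
    · exact hxlab v (nodes_subset_clN_nodes s ρ G hv) (by rwa [icl, clE, clN_lab_of_mem s ρ hv])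
  obtain ⟨v, hv, hvx⟩ := (bijOn_clN_lab s ρ G).surjOn hxG
  exact hxlab v (Finset.mem_sdiff.1 hv).1 hvx

theorem icl_icl (G : Episode α) : icl s ρ (icl s ρ G) = icl s ρ G := by
  rw [icl, clN_eq_self s ρ (newLabels_icl s ρ G), icl, clE_clE]

theorem isEmbedding_icl_self (G : Episode α) : IsEmbedding G (icl s ρ G) id :=
  ⟨Set.injOn_id _, fun _ hv => nodes_subset_clN_nodes s ρ G hv,
    fun _ hv => clN_lab_of_mem s ρ hv, fun _ _ h => edge_clE_of_edge s ρ h⟩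

/-- A new label of `clN s ρ G` either labels a node of `H`, or is forced into every window of
`H` (whose occurrences restrict to occurrences of `G`) and is then a new label of `H`. -/
theorem IsEmbedding.exists_clN_lab_eq {G H : Episode α} {π : ℕ → ℕ} (hπ : IsEmbedding G H π)
    {x : α} (hx : x ∈ newLabels s ρ G) :
    ∃ t ∈ (clN s ρ H).nodes, (clN s ρ H).lab t = x := by
  by_cases hH : ∃ w ∈ H.nodes, H.lab w = x
  · obtain ⟨w, hw, rfl⟩ := hH
    exact ⟨w, nodes_subset_clN_nodes s ρ H hw, clN_lab_of_mem s ρ hw⟩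
  obtain ⟨hxs, hwin, -⟩ := Finset.mem_filter.1 hx
  have hxH : x ∈ newLabels s ρ H := by
    refine Finset.mem_filter.2 ⟨hxs, fun f hf => ?_, fun w hw hwx => hH ⟨w, hw, hwx⟩⟩
    obtain ⟨i, hi, ⟨u, hu⟩, ⟨v, hv⟩⟩ := hwin _ (hπ.isOcc_comp hf)
    exact ⟨i, hi, ⟨_, hu⟩, ⟨_, hv⟩⟩
  obtain ⟨t, ht, htx⟩ := (bijOn_clN_lab s ρ H).surjOn hxH
  exact ⟨t, (Finset.mem_sdiff.1 ht).1, htx⟩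

theorem IsEmbedding.exists_clN {G H : Episode α} {π : ℕ → ℕ} (hπ : IsEmbedding G H π) :
    ∃ π', IsEmbedding (clN s ρ G) (clN s ρ H) π' := by
  choose! τ hτmem hτlab using fun x (hx : x ∈ newLabels s ρ G) => hπ.exists_clN_lab_eq s ρ hx
  have hnew : ∀ {v}, v ∈ (clN s ρ G).nodes → v ∉ G.nodes → (clN s ρ G).lab v ∈ newLabels s ρ G :=
    fun hv hvG => (bijOn_clN_lab s ρ G).mapsTo (Finset.mem_sdiff.2 ⟨hv, hvG⟩)
  let π' : ℕ → ℕ := fun v => if v ∈ G.nodes then π v else τ ((clN s ρ G).lab v)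
  have hlab : ∀ v ∈ (clN s ρ G).nodes, (clN s ρ H).lab (π' v) = (clN s ρ G).lab v := by
    intro v hv
    by_cases hvG : v ∈ G.nodes
    · simp only [π', if_pos hvG, clN_lab_of_mem s ρ hvG, clN_lab_of_mem s ρ (hπ.mapsTo hvG),
        hπ.lab_eq v hvG]
    · simp only [π', if_neg hvG, hτlab _ (hnew hv hvG)]
  refine ⟨π', ⟨fun u hu v hv huv => ?_, fun v hv => ?_, hlab, fun u v h => ?_⟩⟩
  · have hl := (hlab u hu).symm.trans (huv ▸ hlab v hv)
    by_cases huG : u ∈ G.nodes <;> by_cases hvG : v ∈ G.nodes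
    · simp only [π', if_pos huG, if_pos hvG] at huv
      exact hπ.injOn huG hvG huv
    · rw [clN_lab_of_mem s ρ huG] at hl
      exact absurd (hnew hv hvG) (hl ▸ not_mem_newLabels_of_mem s ρ huG)
    · rw [clN_lab_of_mem s ρ hvG] at hl
      exact absurd (hnew hu huG) (hl.symm ▸ not_mem_newLabels_of_mem s ρ hvG)
    · exact (bijOn_clN_lab s ρ G).injOn (Finset.mem_sdiff.2 ⟨hu, huG⟩)
        (Finset.mem_sdiff.2 ⟨hv, hvG⟩) hl
  · by_cases hvG : v ∈ G.nodes
    · simp only [π', if_pos hvG]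
      exact nodes_subset_clN_nodes s ρ H (hπ.mapsTo hvG)
    · simp only [π', if_neg hvG]
      exact hτmem _ (hnew hv hvG)
  · obtain ⟨hu, hv⟩ := G.edge_mem h
    simp only [π', if_pos hu, if_pos hv, clN_edge]
    exact hπ.map_edge h

theorem IsEmbedding.exists_icl {G H : Episode α} {π : ℕ → ℕ} (hπ : IsEmbedding G H π) :
    ∃ π', IsEmbedding (icl s ρ G) (icl s ρ H) π' :=
  (hπ.exists_clN s ρ).imp fun _ h => h.clE s ρ

end Closure

end Episode

open Episode in
theorem stmt5_general {α : Type*} [LinearOrder α] (s : List α) (ρ : ℕ)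
    (G H : Episode α) (hG : inS G) (hH : inS H) :
    Subep G (icl s ρ G) ∧
    icl s ρ (icl s ρ G) = icl s ρ G ∧
    (Subep G H → Subep (icl s ρ G) (icl s ρ H)) := by
  refine ⟨(isEmbedding_icl_self s ρ G).subep, icl_icl s ρ G, fun hGH => ?_⟩
  obtain ⟨π, hπ⟩ := exists_isEmbedding_of_subep hG hH hGH
  obtain ⟨π', hπ'⟩ := hπ.exists_icl s ρ
  exact hπ'.subep

open Episode in
/-- The i-closure `icl = cl_E ∘ cl_N` is an idempotent and monotonic extension
operator on strict transitively closed episodes occurring in `s` within a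
window of length at most `ρ`. -/
theorem stmt5 {α : Type*} [LinearOrder α] (s : List α) (ρ : ℕ)
    (G H : Episode α) (hG : inS G) (hH : inS H)
    (hGocc : Occurs s ρ G) (hHocc : Occurs s ρ H) :
    Subep G (icl s ρ G) ∧
    icl s ρ (icl s ρ G) = icl s ρ G ∧
    (Subep G H → Subep (icl s ρ G) (icl s ρ H)) :=
  stmt5_general s ρ G H hG hH
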